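/- Let p : A(Γ₁) → A(Γ₁) be the endomorphism determined by sending the generator f to the identity element and sending every other generator a, b, c, d, e, g, h to itself (this is well-defined since every defining relator of A(Γ₁) maps to a relation holding in A(Γ₁)). Then the restriction of p to the subgroup of A(Γ₁) generated by {a, b, c, d, ef, h} is injective. -/

import Mathlib

open scoped commutatorElement

/-- The defining relators of the right-angled Artin group on a simple graph `G`:
the commutators of the generators corresponding to adjacent vertices. -/
def raagRels {V : Type*} (G : SimpleGraph V) : Set (FreeGroup V) :=
  {r | ∃ u v : V, G.Adj u v ∧ r = ⁅FreeGroup.of u, FreeGroup.of v⁆}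

/-- The right-angled Artin group on a simple graph `G`. -/
abbrev RAAG {V : Type*} (G : SimpleGraph V) : Type _ := PresentedGroup (raagRels G)

/-- The generator of the right-angled Artin group corresponding to a vertex. -/
def gen {V : Type*} (G : SimpleGraph V) (v : V) : RAAG G := PresentedGroup.of v

/-- Vertices of the graph Γ₁. -/
inductive V1 : Type | a | b | c | d | e | f | g | h
deriving DecidableEq

/-- The graph Γ₁ with edges ab, bc, cd, da, ea, eb, ec, ed, fa, fb, fc, fd, ef,
ga, gb, gc, ge, ha, hb, hd, hf. -/
def G1 : SimpleGraph V1 := SimpleGraph.fromRel (fun u v => (u, v) ∈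
  ([(.a,.b),(.b,.c),(.c,.d),(.d,.a),
    (.e,.a),(.e,.b),(.e,.c),(.e,.d),
    (.f,.a),(.f,.b),(.f,.c),(.f,.d),(.e,.f),
    (.g,.a),(.g,.b),(.g,.c),(.g,.e),
    (.h,.a),(.h,.b),(.h,.d),(.h,.f)] : List (V1 × V1)))

/-!
Let `q` be the endomorphism of `A(Γ₁)` sending `e ↦ ef`, killing `f` and `g`, and fixing
`a, b, c, d, h`; it is well defined because `f` commutes with every neighbour of `e` other than
`f` and `g`. Then `q ∘ p` fixes each of `a, b, c, d, ef, h`, hence fixes the subgroup they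
generate pointwise, so `p` is injective there.
-/

theorem MonoidHom.injOn_closure_of_leftInvOn {G H : Type*} [Group G] [Group H]
    {p : G →* H} (q : H →* G) {s : Set G} (hs : Set.LeftInvOn q p s) :
    Set.InjOn p (Subgroup.closure s) :=
  Set.LeftInvOn.injOn fun _ hx =>
    MonoidHom.eqOn_closure (f := q.comp p) (g := MonoidHom.id G) hs hx

namespace RAAG

variable {V : Type*} {G : SimpleGraph V}

theorem commute_gen_of_adj {u v : V} (huv : G.Adj u v) : Commute (gen G u) (gen G v) := by
  have hrel : PresentedGroup.mk (raagRels G) ⁅FreeGroup.of u, FreeGroup.of v⁆ = 1 :=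
    (QuotientGroup.eq_one_iff _).mpr (Subgroup.subset_normalClosure ⟨u, v, huv, rfl⟩)
  rw [map_commutatorElement] at hrel
  exact commutatorElement_eq_one_iff_commute.mp hrel

def lift {M : Type*} [Group M] (φ : V → M)
    (hφ : ∀ u v, G.Adj u v → Commute (φ u) (φ v)) : RAAG G →* M :=
  PresentedGroup.toGroup (rels := raagRels G) (f := φ) <| by
    rintro _ ⟨u, v, huv, rfl⟩
    rw [map_commutatorElement, FreeGroup.lift_apply_of, FreeGroup.lift_apply_of]
    exact commutatorElement_eq_one_iff_commute.mpr (hφ u v huv)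

@[simp]
theorem lift_gen {M : Type*} [Group M] (φ : V → M)
    (hφ : ∀ u v, G.Adj u v → Commute (φ u) (φ v)) (v : V) : lift φ hφ (gen G v) = φ v :=
  PresentedGroup.toGroup.of _

def killGen [DecidableEq V] (v : V) : RAAG G →* RAAG G :=
  lift (fun u => if u = v then 1 else gen G u) fun u w huw => by
    split_ifs
    exacts [Commute.one_left _, Commute.one_left _, Commute.one_right _,
      commute_gen_of_adj huw]

@[simp]
theorem killGen_gen [DecidableEq V] (v u : V) :
    killGen v (gen G u) = if u = v then 1 else gen G u :=
  lift_gen _ _ u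

end RAAG

open RAAG

instance : DecidableRel G1.Adj := fun u v => by unfold G1; infer_instance

theorem G1.commute_gen_e_mul_gen_f {v : V1} (he : G1.Adj V1.e v) (hf : G1.Adj V1.f v) :
    Commute (gen G1 V1.e * gen G1 V1.f) (gen G1 v) :=
  (commute_gen_of_adj he).mul_left (commute_gen_of_adj hf)

def G1.leftInvGen : V1 → RAAG G1
  | .e => gen G1 V1.e * gen G1 V1.f
  | .f => 1
  | .g => 1
  | v => gen G1 v

theorem G1.commute_leftInvGen_of_adj (u v : V1) (huv : G1.Adj u v) :
    Commute (G1.leftInvGen u) (G1.leftInvGen v) := by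
  cases u <;> cases v <;> simp only [G1.leftInvGen] <;>
    first
      | exact Commute.one_left _
      | exact Commute.one_right _
      | exact commute_gen_of_adj huv
      | exact G1.commute_gen_e_mul_gen_f (by decide) (by decide)
      | exact (G1.commute_gen_e_mul_gen_f (by decide) (by decide)).symm
      | exact absurd huv (by decide)

def G1.leftInvHom : RAAG G1 →* RAAG G1 := lift G1.leftInvGen G1.commute_leftInvGen_of_adj

/-- There is a (well-defined) endomorphism `p` of `A(Γ₁)` killing the generator `f` and
fixing every other generator, and the restriction of `p` to the subgroup generated by
`{a, b, c, d, ef, h}` is injective. -/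
theorem projection_injOn_subgroup :
    ∃ p : RAAG G1 →* RAAG G1,
      p (gen G1 V1.f) = 1 ∧
      p (gen G1 V1.a) = gen G1 V1.a ∧
      p (gen G1 V1.b) = gen G1 V1.b ∧
      p (gen G1 V1.c) = gen G1 V1.c ∧
      p (gen G1 V1.d) = gen G1 V1.d ∧
      p (gen G1 V1.e) = gen G1 V1.e ∧
      p (gen G1 V1.g) = gen G1 V1.g ∧
      p (gen G1 V1.h) = gen G1 V1.h ∧
      Set.InjOn p (Subgroup.closure
        ({gen G1 V1.a, gen G1 V1.b, gen G1 V1.c, gen G1 V1.d,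
          gen G1 V1.e * gen G1 V1.f, gen G1 V1.h} : Set (RAAG G1)) : Subgroup (RAAG G1)) := by
  refine ⟨killGen V1.f, by simp, by simp, by simp, by simp, by simp, by simp, by simp, by simp,
    MonoidHom.injOn_closure_of_leftInvOn G1.leftInvHom ?_⟩
  rintro x (rfl | rfl | rfl | rfl | rfl | rfl) <;> simp [G1.leftInvHom, G1.leftInvGen]
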